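/- arXiv:1811.11360 — 2 statements merged into one kernel-verified Lean document; each statement's English description precedes it below -/
import Mathlib

section
/- Let α₁₁ ≤ α₁₂ and α₂₁ ≤ α₂₂ be positive with (α₁₁, α₁₂) ≺ (α₂₁, α₂₂), and let 1 > p₁ ≥ p₂ > 0. Then N_{α₁₁,p₁} + N_{α₁₂,p₂} ≤_conv N_{α₂₁,p₁} + N_{α₂₂,p₂} (independent summands). -/
open MeasureTheory ProbabilityTheory Real

/-- The negative binomial probability mass function with shape `α` and success probability `p`. -/
noncomputable def negBinomPMF (α p : ℝ) (k : ℕ) : ℝ :=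
  Real.Gamma (k + α) / (Nat.factorial k * Real.Gamma α) * p ^ α * (1 - p) ^ k

/-- The negative binomial distribution as a measure on `ℝ` supported on `ℕ`. -/
noncomputable def negBinomMeasure (α p : ℝ) : Measure ℝ :=
  Measure.sum fun k : ℕ => ENNReal.ofReal (negBinomPMF α p k) • Measure.dirac (k : ℝ)

/-- Convolution order: `ν` equals `μ` convolved with some nonnegative probability measure. -/
def ConvLE (μ ν : Measure ℝ) : Prop :=
  ∃ ρ : Measure ℝ, IsProbabilityMeasure ρ ∧ ρ (Set.Iio 0) = 0 ∧ ν = μ.conv ρ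

/-- Usual stochastic order on measures. -/
def StochLE (μ ν : Measure ℝ) : Prop := ∀ t : ℝ, μ (Set.Ici t) ≤ ν (Set.Ici t)

/-!
Put `qᵢ = 1 - pᵢ`. By majorization `α₁₁ = α₂₁ + δ` and `α₂₂ = α₁₂ + δ` with `δ ≥ 0`. Negative
binomial laws with a common `p` form a convolution semigroup in the shape, so the two sides are
`N_{α₂₁,p₁} ∗ N_{α₁₂,p₂} ∗ N_{δ,p₁}` and `N_{α₂₁,p₁} ∗ N_{α₁₂,p₂} ∗ N_{δ,p₂}`, and it suffices to
write `N_{δ,p₂} = N_{δ,p₁} ∗ τ` with `τ` a probability on `ℕ`. The generating function of `τ` is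
`T(s) = ((p₂ / p₁) (1 - q₁ s) / (1 - q₂ s)) ^ δ`, and
`T' / T = δ ∑ (q₂ ^ (n + 1) - q₁ ^ (n + 1)) sⁿ` has nonnegative coefficients because `q₁ ≤ q₂`;
solving `T' = (T' / T) T` coefficient by coefficient shows `τ ≥ 0`. Identities between generating
functions are checked on formal power series through the first-order linear ODEs they satisfy. `τ`
has mass one because both negative binomial laws do: `N_{α,p}` is the mixture of the Poisson laws of
mean `(1 - p) x` over `x ∼ Gamma(α, p)`.
-/

open PowerSeries Finset
open scoped ENNReal

namespace PowerSeries

section CommRing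

variable {R : Type*} [CommRing R]

theorem coeff_one_sub_C_mul_X_mul_derivative (q : R) (F : R⟦X⟧) (n : ℕ) :
    coeff n ((1 - C q * X) * d⁄dX R F) = (n + 1) * coeff (n + 1) F - q * n * coeff n F := by
  rw [sub_mul, one_mul, map_sub, mul_assoc, coeff_C_mul, coeff_derivative]
  cases n with
  | zero => simp
  | succ m => rw [coeff_succ_X_mul, coeff_derivative]; push_cast; ring

theorem one_sub_C_mul_X_mul_rescale_mk_one (q : R) : (1 - C q * X) * rescale q (mk 1) = 1 := by
  rw [← rescale_X, ← map_one (rescale q), ← map_sub, ← map_mul, mul_comm,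
    mk_one_mul_one_sub_eq_one, map_one]

theorem one_sub_C_mul_X_ne_zero [Nontrivial R] (q : R) : (1 - C q * X : R⟦X⟧) ≠ 0 := fun h => by
  simpa using congrArg constantCoeff h

end CommRing

variable {K : Type*} [Field K]

theorem eq_of_one_sub_C_mul_X_mul_derivative_eq [CharZero K] {q c : K} {F G : K⟦X⟧}
    (hF : (1 - C q * X) * d⁄dX K F = C c * F) (hG : (1 - C q * X) * d⁄dX K G = C c * G)
    (h0 : constantCoeff F = constantCoeff G) : F = G := by
  ext n
  induction n with
  | zero => simpa using h0
  | succ m ih =>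
    have hF' := congrArg (coeff m) hF
    have hG' := congrArg (coeff m) hG
    rw [coeff_one_sub_C_mul_X_mul_derivative, coeff_C_mul] at hF' hG'
    have hm : (m + 1 : K) ≠ 0 := Nat.cast_add_one_ne_zero m
    apply mul_left_cancel₀ hm
    linear_combination hF' - hG' + (c + q * m) * ih

/-- Coefficients of the solution `T` of `T' = (mk g) * T` with `T(0) = c`. -/
noncomputable def linODESol (g : ℕ → K) (c : K) : ℕ → K
  | 0 => c
  | k + 1 => (∑ n ∈ range (k + 1), g n * linODESol g c (k - n)) / (k + 1)
  decreasing_by omega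

theorem constantCoeff_mk_linODESol (g : ℕ → K) (c : K) :
    constantCoeff (mk (linODESol g c)) = c := by
  rw [constantCoeff_mk, linODESol]

theorem derivative_mk_linODESol [CharZero K] (g : ℕ → K) (c : K) :
    d⁄dX K (mk (linODESol g c)) = mk g * mk (linODESol g c) := by
  ext n
  rw [coeff_derivative, coeff_mul, Nat.sum_antidiagonal_eq_sum_range_succ_mk]
  simp only [coeff_mk, linODESol]
  field_simp

theorem linODESol_nonneg [LinearOrder K] [IsStrictOrderedRing K] {g : ℕ → K} {c : K}
    (hg : ∀ n, 0 ≤ g n) (hc : 0 ≤ c) (k : ℕ) : 0 ≤ linODESol g c k := by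
  induction k using Nat.strong_induction_on with
  | _ k ih =>
    cases k with
    | zero => simpa [linODESol] using hc
    | succ m =>
      rw [linODESol]
      exact div_nonneg (sum_nonneg fun n _ => mul_nonneg (hg n) (ih _ (by omega))) (by positivity)

end PowerSeries

section NegBinom

variable {α p : ℝ}

noncomputable def negBinomSeries (α p : ℝ) : ℝ⟦X⟧ := mk (negBinomPMF α p)

theorem coeff_negBinomSeries_nonneg (hα : 0 ≤ α) (hp : 0 ≤ p) (hp1 : p ≤ 1) (k : ℕ) :
    0 ≤ coeff k (negBinomSeries α p) := by
  rw [negBinomSeries, coeff_mk]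
  have := Real.Gamma_nonneg_of_nonneg (s := k + α) (by positivity)
  have := Real.Gamma_nonneg_of_nonneg hα
  have : 0 ≤ 1 - p := sub_nonneg.2 hp1
  unfold negBinomPMF
  positivity

theorem succ_mul_negBinomPMF_succ (hα : 0 < α) (n : ℕ) :
    (n + 1) * negBinomPMF α p (n + 1) = (1 - p) * ((n + α) * negBinomPMF α p n) := by
  have hΓ : Real.Gamma (n + 1 + α) = (n + α) * Real.Gamma (n + α) := by
    rw [add_right_comm, Real.Gamma_add_one (by positivity)]
  simp only [negBinomPMF, Nat.cast_succ, hΓ, Nat.factorial_succ, Nat.cast_mul]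
  field_simp
  ring

theorem constantCoeff_negBinomSeries (hα : 0 < α) :
    constantCoeff (negBinomSeries α p) = p ^ α := by
  simp [negBinomSeries, negBinomPMF, (Real.Gamma_pos_of_pos hα).ne']

theorem one_sub_C_mul_X_mul_derivative_negBinomSeries (hα : 0 < α) :
    (1 - C (1 - p) * X) * d⁄dX ℝ (negBinomSeries α p) = C (α * (1 - p)) * negBinomSeries α p := by
  ext n
  rw [coeff_one_sub_C_mul_X_mul_derivative, coeff_C_mul]
  simp only [negBinomSeries, coeff_mk]
  linear_combination succ_mul_negBinomPMF_succ (p := p) hα n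

theorem negBinomSeries_add {β : ℝ} (hα : 0 < α) (hβ : 0 < β) (hp : 0 < p) :
    negBinomSeries (α + β) p = negBinomSeries α p * negBinomSeries β p := by
  refine eq_of_one_sub_C_mul_X_mul_derivative_eq
    (one_sub_C_mul_X_mul_derivative_negBinomSeries (add_pos hα hβ)) ?_ ?_
  · rw [Derivation.leibniz, smul_eq_mul, smul_eq_mul, add_mul, map_add]
    linear_combination
      negBinomSeries α p * one_sub_C_mul_X_mul_derivative_negBinomSeries (p := p) hβ
        + negBinomSeries β p * one_sub_C_mul_X_mul_derivative_negBinomSeries (p := p) hα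
  · rw [map_mul, constantCoeff_negBinomSeries hα, constantCoeff_negBinomSeries hβ,
      constantCoeff_negBinomSeries (add_pos hα hβ), Real.rpow_add hp]

end NegBinom

section Ratio

variable {δ p₁ p₂ : ℝ}

/-- `((p₂ / p₁) (1 - q₁ s) / (1 - q₂ s)) ^ δ` with `qᵢ = 1 - pᵢ`, as the solution of
`T' = δ (q₂ / (1 - q₂ s) - q₁ / (1 - q₁ s)) T`. -/
noncomputable def negBinomRatio (δ p₁ p₂ : ℝ) : ℝ⟦X⟧ :=
  mk <| linODESol (fun n => δ * ((1 - p₂) ^ (n + 1) - (1 - p₁) ^ (n + 1))) ((p₂ / p₁) ^ δ)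

theorem coeff_negBinomRatio_nonneg (hδ : 0 ≤ δ) (hp₂ : 0 < p₂) (hp : p₂ ≤ p₁) (hp₁ : p₁ ≤ 1)
    (k : ℕ) :
    0 ≤ coeff k (negBinomRatio δ p₁ p₂) := by
  rw [negBinomRatio, coeff_mk]
  refine linODESol_nonneg (fun n => mul_nonneg hδ (sub_nonneg.2 ?_))
    (Real.rpow_nonneg (div_nonneg hp₂.le (hp₂.le.trans hp)) δ) k
  exact pow_le_pow_left₀ (by linarith) (by linarith) _

theorem negBinomSeries_mul_negBinomRatio (hδ : 0 < δ) (hp₂ : 0 < p₂) (hp : p₂ ≤ p₁) :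
    negBinomSeries δ p₁ * negBinomRatio δ p₁ p₂ = negBinomSeries δ p₂ := by
  set q₁ := 1 - p₁
  set q₂ := 1 - p₂
  set F := negBinomSeries δ p₁
  set T := negBinomRatio δ p₁ p₂ with hT_def
  have hg : mk (fun n => δ * (q₂ ^ (n + 1) - q₁ ^ (n + 1))) =
      C δ * (C q₂ * rescale q₂ (mk 1) - C q₁ * rescale q₁ (mk 1)) := by
    ext n
    simp [coeff_rescale, pow_succ, mul_comm]
  have hT : d⁄dX ℝ T = mk (fun n => δ * (q₂ ^ (n + 1) - q₁ ^ (n + 1))) * T :=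
    derivative_mk_linODESol _ _
  have hF := one_sub_C_mul_X_mul_derivative_negBinomSeries (p := p₁) hδ
  refine eq_of_one_sub_C_mul_X_mul_derivative_eq ?_
    (one_sub_C_mul_X_mul_derivative_negBinomSeries hδ) ?_
  · -- multiplied by `1 - q₁ X`, both geometric series in `hg` cancel against `1 - qᵢ X`
    apply mul_left_cancel₀ (one_sub_C_mul_X_ne_zero q₁)
    rw [Derivation.leibniz, smul_eq_mul, smul_eq_mul, hT, hg]
    rw [map_mul] at hF ⊢
    linear_combination
      (F * T * C δ * C q₂ * (1 - C q₁ * X)) * one_sub_C_mul_X_mul_rescale_mk_one q₂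
        - (F * T * C δ * C q₁ * (1 - C q₂ * X)) * one_sub_C_mul_X_mul_rescale_mk_one q₁
        + ((1 - C q₂ * X) * T) * hF
  · have hp₁ : 0 < p₁ := hp₂.trans_le hp
    rw [map_mul, constantCoeff_negBinomSeries hδ, constantCoeff_negBinomSeries hδ, hT_def,
      negBinomRatio, constantCoeff_mk_linODESol, Real.div_rpow hp₂.le hp₁.le,
      mul_div_cancel₀ _ (Real.rpow_pos_of_pos hp₁ δ).ne']

end Ratio

theorem ENNReal.tsum_prod_eq_tsum_sum_antidiagonal (w : ℕ × ℕ → ℝ≥0∞) :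
    ∑' p, w p = ∑' n, ∑ p ∈ antidiagonal n, w p := by
  rw [← Finset.HasAntidiagonal.sigmaAntidiagonalEquivProd.tsum_eq w, ENNReal.tsum_sigma']
  exact tsum_congr fun n => Finset.tsum_subtype (antidiagonal n) w

noncomputable def seriesMeasure (F : ℝ⟦X⟧) : Measure ℝ :=
  Measure.sum fun k : ℕ => ENNReal.ofReal (coeff k F) • Measure.dirac (k : ℝ)

instance (F : ℝ⟦X⟧) : SFinite (seriesMeasure F) := by
  unfold seriesMeasure
  infer_instance

theorem lintegral_seriesMeasure (F : ℝ⟦X⟧) (φ : ℝ → ℝ≥0∞) :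
    ∫⁻ x, φ x ∂seriesMeasure F = ∑' k, ENNReal.ofReal (coeff k F) * φ k := by
  simp [seriesMeasure, lintegral_sum_measure, lintegral_smul_measure]

theorem seriesMeasure_Iio_zero (F : ℝ⟦X⟧) : seriesMeasure F (Set.Iio 0) = 0 := by
  rw [← lintegral_indicator_one measurableSet_Iio, lintegral_seriesMeasure]
  simp

theorem seriesMeasure_mul {F G : ℝ⟦X⟧} (hF : ∀ k, 0 ≤ coeff k F) (hG : ∀ k, 0 ≤ coeff k G) :
    seriesMeasure (F * G) = seriesMeasure F ∗ seriesMeasure G := by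
  refine Measure.ext_of_lintegral _ fun φ hφ => ?_
  rw [Measure.lintegral_conv hφ]
  simp only [lintegral_seriesMeasure, coeff_mul]
  simp_rw [← ENNReal.tsum_mul_left, ← mul_assoc]
  rw [← ENNReal.tsum_prod, ENNReal.tsum_prod_eq_tsum_sum_antidiagonal]
  refine tsum_congr fun n => ?_
  rw [ENNReal.ofReal_sum_of_nonneg fun p _ => mul_nonneg (hF _) (hG _), Finset.sum_mul]
  refine Finset.sum_congr rfl fun p hp => ?_
  rw [ENNReal.ofReal_mul (hF _), ← mem_antidiagonal.1 hp, Nat.cast_add]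

section Mass

open Set

variable {α p : ℝ}

theorem gammaPDFReal_mul_poisson_eq {x : ℝ} (hx : 0 < x) (k : ℕ) :
    gammaPDFReal α p x * (exp (-((1 - p) * x)) * ((1 - p) * x) ^ k / k.factorial) =
      p ^ α * (1 - p) ^ k / (k.factorial * Gamma α) * (exp (-x) * x ^ ((k + α) - 1)) := by
  rw [gammaPDFReal, if_pos hx.le, show (k + α) - 1 = (α - 1) + k by ring, rpow_add hx,
    rpow_natCast, mul_pow]
  have : exp (-(p * x)) * exp (-((1 - p) * x)) = exp (-x) := by rw [← exp_add]; ring_nf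
  rw [← this]
  ring

theorem ofReal_negBinomPMF_eq_lintegral (hα : 0 < α) (hp : 0 ≤ p) (hp1 : p ≤ 1) (k : ℕ) :
    ENNReal.ofReal (negBinomPMF α p k) = ∫⁻ x in Ioi 0,
      ENNReal.ofReal
        (gammaPDFReal α p x * (exp (-((1 - p) * x)) * ((1 - p) * x) ^ k / k.factorial)) := by
  have hkα : 0 < k + α := by positivity
  have hc : 0 ≤ p ^ α * (1 - p) ^ k / (k.factorial * Gamma α) := by
    have := Gamma_pos_of_pos hα
    have : 0 ≤ 1 - p := sub_nonneg.2 hp1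
    positivity
  rw [setLIntegral_congr_fun measurableSet_Ioi fun x hx => by rw [gammaPDFReal_mul_poisson_eq hx],
    ← ofReal_integral_eq_lintegral_ofReal ((GammaIntegral_convergent hkα).const_mul _),
    integral_const_mul, ← Gamma_eq_integral hkα]
  · congr 1
    unfold negBinomPMF
    ring
  · filter_upwards [ae_restrict_mem measurableSet_Ioi] with x (hx : 0 < x)
    positivity

theorem tsum_ofReal_negBinomPMF (hα : 0 < α) (hp : 0 < p) (hp1 : p ≤ 1) :
    ∑' k, ENNReal.ofReal (negBinomPMF α p k) = 1 := by
  have hPoisson : ∀ x ∈ Ioi (0 : ℝ), ∑' k : ℕ, ENNReal.ofReal (gammaPDFReal α p x *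
      (exp (-((1 - p) * x)) * ((1 - p) * x) ^ k / k.factorial)) = gammaPDF α p x := by
    intro x (hx : 0 < x)
    have hr : 0 ≤ (1 - p) * x := by have : 0 ≤ 1 - p := sub_nonneg.2 hp1; positivity
    have hsum : HasSum (fun k : ℕ => exp (-((1 - p) * x)) * ((1 - p) * x) ^ k / k.factorial) 1 :=
      hasSum_one_poissonMeasure ⟨_, hr⟩
    have h := hsum.mul_left (gammaPDFReal α p x)
    rw [mul_one] at h
    rw [gammaPDF, ← ENNReal.ofReal_tsum_of_nonneg (fun k => ?_) h.summable, h.tsum_eq]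
    have := gammaPDFReal_nonneg hα hp x
    positivity
  simp_rw [ofReal_negBinomPMF_eq_lintegral hα hp.le hp1]
  rw [← lintegral_tsum fun k => by fun_prop, setLIntegral_congr_fun measurableSet_Ioi hPoisson,
    setLIntegral_congr Ioi_ae_eq_Ici, setLIntegral_eq_of_support_subset,
    lintegral_gammaPDF_eq_one hα hp]
  intro x hx
  by_contra h
  exact hx (gammaPDF_of_neg (not_le.1 h))

end Mass

theorem MeasureTheory.Measure.conv_apply_univ {M : Type*} [AddMonoid M] [MeasurableSpace M]
    [MeasurableAdd₂ M] (μ ν : Measure M) [SFinite ν] :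
    (μ ∗ ν) Set.univ = μ Set.univ * ν Set.univ := by
  rw [Measure.conv, Measure.map_apply measurable_add MeasurableSet.univ, Set.preimage_univ,
    ← Set.univ_prod_univ, Measure.prod_prod]

theorem ConvLE.refl (μ : Measure ℝ) [SFinite μ] : ConvLE μ μ :=
  ⟨Measure.dirac 0, inferInstance, by simp, (Measure.conv_dirac_zero μ).symm⟩

theorem ConvLE.conv_left {μ ν : Measure ℝ} [SFinite μ] (h : ConvLE μ ν) (κ : Measure ℝ) :
    ConvLE (κ ∗ μ) (κ ∗ ν) := by
  obtain ⟨ρ, hρ, hρ0, rfl⟩ := h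
  exact ⟨ρ, hρ, hρ0, (Measure.conv_assoc κ μ ρ).symm⟩

section NegBinomMeasure

variable {α β p : ℝ}

theorem negBinomMeasure_eq_seriesMeasure (α p : ℝ) :
    negBinomMeasure α p = seriesMeasure (negBinomSeries α p) := by
  simp only [negBinomMeasure, seriesMeasure, negBinomSeries, coeff_mk]

instance (α p : ℝ) : SFinite (negBinomMeasure α p) := by
  rw [negBinomMeasure_eq_seriesMeasure]
  infer_instance

theorem isProbabilityMeasure_negBinomMeasure (hα : 0 < α) (hp : 0 < p) (hp1 : p ≤ 1) :
    IsProbabilityMeasure (negBinomMeasure α p) := by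
  constructor
  rw [← lintegral_indicator_one MeasurableSet.univ, negBinomMeasure_eq_seriesMeasure,
    lintegral_seriesMeasure]
  simpa [negBinomSeries] using tsum_ofReal_negBinomPMF hα hp hp1

theorem negBinomMeasure_add (hα : 0 < α) (hβ : 0 < β) (hp : 0 < p) (hp1 : p ≤ 1) :
    negBinomMeasure (α + β) p = negBinomMeasure α p ∗ negBinomMeasure β p := by
  simp only [negBinomMeasure_eq_seriesMeasure]
  rw [negBinomSeries_add hα hβ hp, seriesMeasure_mul (coeff_negBinomSeries_nonneg hα.le hp.le hp1)
    (coeff_negBinomSeries_nonneg hβ.le hp.le hp1)]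

theorem convLE_negBinomMeasure {δ p₁ p₂ : ℝ} (hδ : 0 < δ) (hp₂ : 0 < p₂) (hp : p₂ ≤ p₁)
    (hp₁ : p₁ ≤ 1) : ConvLE (negBinomMeasure δ p₁) (negBinomMeasure δ p₂) := by
  have : IsProbabilityMeasure (negBinomMeasure δ p₁) :=
    isProbabilityMeasure_negBinomMeasure hδ (hp₂.trans_le hp) hp₁
  have : IsProbabilityMeasure (negBinomMeasure δ p₂) :=
    isProbabilityMeasure_negBinomMeasure hδ hp₂ (hp.trans hp₁)
  set τ := seriesMeasure (negBinomRatio δ p₁ p₂)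
  have hconv : negBinomMeasure δ p₂ = negBinomMeasure δ p₁ ∗ τ := by
    rw [negBinomMeasure_eq_seriesMeasure, ← negBinomSeries_mul_negBinomRatio hδ hp₂ hp,
      seriesMeasure_mul (coeff_negBinomSeries_nonneg hδ.le (hp₂.le.trans hp) hp₁)
        (coeff_negBinomRatio_nonneg hδ.le hp₂ hp hp₁), negBinomMeasure_eq_seriesMeasure]
  have hτ : τ Set.univ = 1 := by
    have h := congrArg (· Set.univ) hconv
    simp only [Measure.conv_apply_univ, measure_univ, one_mul] at h
    exact h.symm
  exact ⟨τ, ⟨hτ⟩, seriesMeasure_Iio_zero _, hconv⟩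

end NegBinomMeasure

theorem negBinom_majorize_shape_conv_order_general (α₁₁ α₁₂ α₂₁ α₂₂ p₁ p₂ : ℝ)
    (ha21 : 0 < α₂₁)
    (ho1 : α₁₁ ≤ α₁₂) (ho2 : α₂₁ ≤ α₂₂)
    (hsum : α₁₁ + α₁₂ = α₂₁ + α₂₂) (hmax : max α₁₁ α₁₂ ≤ max α₂₁ α₂₂)
    (hp2 : 0 < p₂) (hp : p₂ ≤ p₁) (hp1 : p₁ < 1) :
    ConvLE ((negBinomMeasure α₁₁ p₁).conv (negBinomMeasure α₁₂ p₂))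
      ((negBinomMeasure α₂₁ p₁).conv (negBinomMeasure α₂₂ p₂)) := by
  rw [max_eq_right ho1, max_eq_right ho2] at hmax
  obtain h | ⟨δ, hδ, rfl⟩ : α₂₁ = α₁₁ ∨ ∃ δ, 0 < δ ∧ α₁₁ = α₂₁ + δ := by
    obtain h | h := (show α₂₁ ≤ α₁₁ by linarith).eq_or_lt
    exacts [.inl h, .inr ⟨α₁₁ - α₂₁, by linarith, by ring⟩]
  · obtain rfl : α₂₂ = α₁₂ := by linarith
    rw [h]
    exact ConvLE.refl _
  · obtain rfl : α₂₂ = α₁₂ + δ := by linarith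
    rw [negBinomMeasure_add ha21 hδ (hp2.trans_le hp) hp1.le,
      negBinomMeasure_add (by linarith) hδ hp2 (hp.trans hp1.le), Measure.conv_assoc,
      Measure.conv_comm (negBinomMeasure δ p₁)]
    exact ((convLE_negBinomMeasure hδ hp2 hp hp1.le).conv_left _).conv_left _

/-- Convolution order under majorization of the shapes, similarly ordered with
fixed success probabilities. -/
theorem negBinom_majorize_shape_conv_order (α₁₁ α₁₂ α₂₁ α₂₂ p₁ p₂ : ℝ)
    (ha11 : 0 < α₁₁) (ha21 : 0 < α₂₁)
    (ho1 : α₁₁ ≤ α₁₂) (ho2 : α₂₁ ≤ α₂₂)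
    (hsum : α₁₁ + α₁₂ = α₂₁ + α₂₂) (hmax : max α₁₁ α₁₂ ≤ max α₂₁ α₂₂)
    (hp2 : 0 < p₂) (hp : p₂ ≤ p₁) (hp1 : p₁ < 1) :
    ConvLE ((negBinomMeasure α₁₁ p₁).conv (negBinomMeasure α₁₂ p₂))
      ((negBinomMeasure α₂₁ p₁).conv (negBinomMeasure α₂₂ p₂)) :=
  negBinom_majorize_shape_conv_order_general α₁₁ α₁₂ α₂₁ α₂₂ p₁ p₂ ha21 ho1 ho2 hsum hmax hp2 hp hp1
end

section
/- Let α₁ < α₂ be positive shapes and p₁ > p₂ in (0,1) be success probabilities. Then the 'aligned' convolution N_{α₂,p₁} + N_{α₁,p₂} ≤_conv N_{α₁,p₁} + N_{α₂,p₂} (the configuration pairing the larger shape with the smaller probability dominates, independent summands). -/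
open MeasureTheory ProbabilityTheory Real

/-!
With `q = 1 - p`, the generating function of `N_{α,p}` is `p ^ α (1 - q s)⁻ᵅ = p ^ α exp (α L_q)`,
where `L_q = ∑ qᵏ sᵏ / k = -log (1 - q s)`. Hence the generating function of
`N_{α₁,p₁} + N_{α₂,p₂}` is that of `N_{α₂,p₁} + N_{α₁,p₂}` times
`(p₂ / p₁) ^ (α₂ - α₁) exp ((α₂ - α₁) (L_{q₂} - L_{q₁}))`. Since `α₂ > α₁` and `q₂ > q₁`, the
exponent has nonnegative coefficients, so this factor is the generating function of a compound
Poisson law on `ℕ`: its coefficients are nonnegative and sum to `1`. All identities are proved for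
formal power series, via uniqueness for the linear equation `A f' = B f`.
-/

open PowerSeries
open Finset.HasAntidiagonal (antidiagonal mem_antidiagonal)
open scoped Nat ENNReal

namespace PowerSeries

theorem eq_of_mul_derivative_eq {K : Type*} [Field K] [CharZero K] {A B G H : K⟦X⟧}
    (hA : constantCoeff A ≠ 0) (hG₀ : constantCoeff G ≠ 0)
    (hGH₀ : constantCoeff G = constantCoeff H)
    (hG : A * d⁄dX K G = B * G) (hH : A * d⁄dX K H = B * H) : G = H := by
  have hGinv : G * G⁻¹ = 1 := PowerSeries.mul_inv_cancel G hG₀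
  have hA0 : A ≠ 0 := fun h => hA (by simp [h])
  have hwronskian : d⁄dX K (H * G⁻¹) = 0 := by
    refine mul_left_cancel₀ hA0 ?_
    rw [Derivation.leibniz, derivative_inv', smul_eq_mul, smul_eq_mul, mul_zero]
    linear_combination G⁻¹ * hH - H * G⁻¹ ^ 2 * hG - B * H * G⁻¹ * hGinv
  have hratio : H * G⁻¹ = 1 :=
    derivative.ext (by rw [hwronskian, derivative_one])
      (by rw [map_mul, constantCoeff_inv, ← hGH₀, mul_inv_cancel₀ hG₀, map_one])
  calc G = H * G⁻¹ * G := by rw [hratio, one_mul]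
    _ = H := by rw [mul_assoc, mul_comm G⁻¹, hGinv, mul_one]

theorem coeff_zero_one_sub_C_mul_X_mul {R : Type*} [CommRing R] (q : R) (f : R⟦X⟧) :
    coeff 0 ((1 - C q * X) * f) = coeff 0 f := by
  simp [sub_mul, mul_assoc]

theorem coeff_succ_one_sub_C_mul_X_mul {R : Type*} [CommRing R] (q : R) (f : R⟦X⟧) (n : ℕ) :
    coeff (n + 1) ((1 - C q * X) * f) = coeff (n + 1) f - q * coeff n f := by
  simp [sub_mul, mul_assoc, coeff_succ_X_mul]

section ExpSubst

variable {A : Type*} [CommRing A] [Algebra ℚ A]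

theorem derivative_exp_subst {g : A⟦X⟧} (hg : constantCoeff g = 0) :
    d⁄dX A ((exp A).subst g) = (exp A).subst g * d⁄dX A g := by
  rw [derivative_subst (HasSubst.of_constantCoeff_zero' hg), derivative_exp]

theorem constantCoeff_exp_subst {g : A⟦X⟧} (hg : constantCoeff g = 0) :
    constantCoeff ((exp A).subst g : A⟦X⟧) = 1 := by
  rw [← coeff_zero_eq_constantCoeff_apply, coeff_subst' (HasSubst.of_constantCoeff_zero' hg),
    finsum_eq_single _ 0]
  · simp
  · intro d hd
    simp [coeff_zero_eq_constantCoeff_apply, map_pow, hg, zero_pow hd]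

end ExpSubst

section Field

variable {K : Type*} [Field K] [CharZero K]

theorem coeff_exp_eq_inv_factorial (n : ℕ) : coeff n (exp K) = (n ! : K)⁻¹ := by
  simp [coeff_exp]

theorem exp_subst_add {f g : K⟦X⟧} (hf : constantCoeff f = 0) (hg : constantCoeff g = 0) :
    (exp K).subst (f + g) = (exp K).subst f * (exp K).subst g := by
  have hfg : constantCoeff (f + g) = 0 := by rw [map_add, hf, hg, add_zero]
  refine eq_of_mul_derivative_eq (A := 1) (B := d⁄dX K (f + g)) one_ne_zero
    (by rw [constantCoeff_exp_subst hfg]; exact one_ne_zero) ?_ ?_ ?_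
  · rw [map_mul, constantCoeff_exp_subst hf, constantCoeff_exp_subst hg,
      constantCoeff_exp_subst hfg, mul_one]
  · rw [one_mul, derivative_exp_subst hfg, mul_comm]
  · rw [one_mul, Derivation.leibniz, smul_eq_mul, smul_eq_mul, derivative_exp_subst hf,
      derivative_exp_subst hg, map_add]
    ring

/-- The series `∑ qᵏ Xᵏ / k` of `-log (1 - q X)`; its constant coefficient is `q⁰ / 0 = 0`. -/
noncomputable def negLogOneSub (q : K) : K⟦X⟧ := mk fun k => q ^ k / k

@[simp]
theorem constantCoeff_negLogOneSub (q : K) : constantCoeff (negLogOneSub q) = 0 := by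
  simp [negLogOneSub, ← coeff_zero_eq_constantCoeff_apply]

theorem derivative_negLogOneSub (q : K) : d⁄dX K (negLogOneSub q) = mk fun k => q ^ (k + 1) := by
  ext k
  have : (k + 1 : K) ≠ 0 := by exact_mod_cast k.succ_ne_zero
  simp [negLogOneSub, coeff_derivative, this]

theorem one_sub_mul_derivative_negLogOneSub (q : K) :
    (1 - C q * X) * d⁄dX K (negLogOneSub q) = C q := by
  ext (_ | n)
  · simp [derivative_negLogOneSub, sub_mul]
  · simp [derivative_negLogOneSub, sub_mul, mul_assoc, coeff_succ_X_mul]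
    ring

end Field

theorem hasSum_coeff_negLogOneSub {q : ℝ} (hq : |q| < 1) :
    HasSum (fun k => coeff k (negLogOneSub q)) (-Real.log (1 - q)) := by
  refine (hasSum_nat_add_iff' 1).mp ?_
  simpa [negLogOneSub] using Real.hasSum_pow_div_log_of_abs_lt_one hq

theorem hasSum_coeff_C_mul_negLogOneSub_sub (β : ℝ) {q₁ q₂ : ℝ} (hq₁ : |q₁| < 1)
    (hq₂ : |q₂| < 1) :
    HasSum (fun n => coeff n (C β * (negLogOneSub q₂ - negLogOneSub q₁)))
      (β * (Real.log (1 - q₁) - Real.log (1 - q₂))) := by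
  have key := ((hasSum_coeff_negLogOneSub hq₂).sub (hasSum_coeff_negLogOneSub hq₁)).mul_left β
  rw [neg_sub_neg] at key
  simpa only [coeff_C_mul, map_sub] using key

theorem coeff_C_mul_negLogOneSub_sub_nonneg {β q₁ q₂ : ℝ} (hβ : 0 ≤ β) (hq₁ : 0 ≤ q₁)
    (hq : q₁ ≤ q₂) (n : ℕ) : 0 ≤ coeff n (C β * (negLogOneSub q₂ - negLogOneSub q₁)) := by
  rw [coeff_C_mul, map_sub, negLogOneSub, negLogOneSub, coeff_mk, coeff_mk, ← sub_div]
  exact mul_nonneg hβ (div_nonneg (sub_nonneg.mpr (pow_le_pow_left₀ hq₁ hq n)) n.cast_nonneg)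

end PowerSeries

theorem negBinomPMF_zero {α : ℝ} (hα : 0 < α) (p : ℝ) : negBinomPMF α p 0 = p ^ α := by
  have := (Real.Gamma_pos_of_pos hα).ne'
  simp [negBinomPMF, this]

theorem negBinomPMF_succ {α : ℝ} (hα : 0 < α) (p : ℝ) (k : ℕ) :
    negBinomPMF α p (k + 1) * (k + 1) = (1 - p) * (k + α) * negBinomPMF α p k := by
  have hΓ : Real.Gamma ((k + 1 : ℕ) + α) = (k + α) * Real.Gamma (k + α) := by
    rw [Nat.cast_succ, add_right_comm, Real.Gamma_add_one (by positivity)]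
  have := (Real.Gamma_pos_of_pos hα).ne'
  simp only [negBinomPMF, hΓ, Nat.factorial_succ, Nat.cast_mul, pow_succ]
  field_simp
  push_cast
  ring

theorem coeff_mk_negBinomPMF_nonneg {α p : ℝ} (hα : 0 < α) (hp₀ : 0 ≤ p) (hp₁ : p ≤ 1) (k : ℕ) :
    0 ≤ coeff k (mk (negBinomPMF α p)) := by
  have := Real.Gamma_pos_of_pos hα
  have := Real.Gamma_pos_of_pos (by positivity : (0 : ℝ) < k + α)
  have : 0 ≤ 1 - p := by linarith
  rw [coeff_mk, negBinomPMF]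
  positivity

theorem one_sub_mul_derivative_mk_negBinomPMF {α : ℝ} (hα : 0 < α) (p : ℝ) :
    (1 - C (1 - p) * X) * d⁄dX ℝ (mk (negBinomPMF α p)) =
      C (α * (1 - p)) * mk (negBinomPMF α p) := by
  ext (_ | n)
  · rw [coeff_zero_one_sub_C_mul_X_mul, coeff_derivative, coeff_C_mul, coeff_mk, coeff_mk]
    linear_combination negBinomPMF_succ hα p 0
  · rw [coeff_succ_one_sub_C_mul_X_mul, coeff_derivative, coeff_derivative, coeff_C_mul,
      coeff_mk, coeff_mk]
    have := negBinomPMF_succ hα p (n + 1)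
    push_cast at this ⊢
    linear_combination this

theorem mk_negBinomPMF_eq_exp_subst {α p : ℝ} (hα : 0 < α) (hp : 0 < p) :
    mk (negBinomPMF α p) = C (p ^ α) * (exp ℝ).subst (C α * negLogOneSub (1 - p)) := by
  have hg : constantCoeff (C α * negLogOneSub (1 - p)) = 0 := by simp
  refine eq_of_mul_derivative_eq (B := C (α * (1 - p))) (by simp)
    (by simp [negBinomPMF_zero hα, (Real.rpow_pos_of_pos hp α).ne'])
    (by simp [negBinomPMF_zero hα, constantCoeff_exp_subst hg])
    (one_sub_mul_derivative_mk_negBinomPMF hα p) ?_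
  rw [Derivation.leibniz, derivative_C, smul_zero, add_zero, smul_eq_mul, derivative_exp_subst hg,
    Derivation.leibniz, derivative_C, smul_zero, add_zero, smul_eq_mul, map_mul C α]
  linear_combination C (p ^ α) * (exp ℝ).subst (C α * negLogOneSub (1 - p)) * C α *
    one_sub_mul_derivative_negLogOneSub (1 - p)

theorem mk_negBinomPMF_mul_mk_negBinomPMF {α₁ α₂ p₁ p₂ : ℝ} (hα₁ : 0 < α₁) (hα₂ : 0 < α₂)
    (hp₁ : 0 < p₁) (hp₂ : 0 < p₂) :
    mk (negBinomPMF α₁ p₁) * mk (negBinomPMF α₂ p₂) =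
      mk (negBinomPMF α₂ p₁) * mk (negBinomPMF α₁ p₂) *
        (C ((p₂ / p₁) ^ (α₂ - α₁)) *
          (exp ℝ).subst (C (α₂ - α₁) * (negLogOneSub (1 - p₂) - negLogOneSub (1 - p₁)))) := by
  set L₁ := negLogOneSub (1 - p₁)
  set L₂ := negLogOneSub (1 - p₂)
  have hscal : p₁ ^ α₁ * p₂ ^ α₂ = p₁ ^ α₂ * p₂ ^ α₁ * (p₂ / p₁) ^ (α₂ - α₁) := by
    rw [Real.div_rpow hp₂.le hp₁.le, Real.rpow_sub hp₁, Real.rpow_sub hp₂]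
    field_simp
  rw [mk_negBinomPMF_eq_exp_subst hα₁ hp₁, mk_negBinomPMF_eq_exp_subst hα₂ hp₂,
    mk_negBinomPMF_eq_exp_subst hα₂ hp₁, mk_negBinomPMF_eq_exp_subst hα₁ hp₂]
  calc C (p₁ ^ α₁) * (exp ℝ).subst (C α₁ * L₁) * (C (p₂ ^ α₂) * (exp ℝ).subst (C α₂ * L₂))
      = C (p₁ ^ α₁ * p₂ ^ α₂) * (exp ℝ).subst (C α₁ * L₁ + C α₂ * L₂) := by
        rw [exp_subst_add (by simp [L₁]) (by simp [L₂]), map_mul]; ring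
    _ = C (p₁ ^ α₂ * p₂ ^ α₁ * (p₂ / p₁) ^ (α₂ - α₁)) *
          (exp ℝ).subst (C α₂ * L₁ + C α₁ * L₂ + C (α₂ - α₁) * (L₂ - L₁)) := by
        rw [hscal]; congr 2; simp only [map_sub]; ring
    _ = _ := by
        rw [exp_subst_add (by simp [L₁, L₂]) (by simp [L₁, L₂]),
          exp_subst_add (by simp [L₁]) (by simp [L₂]), map_mul, map_mul]
        ring

theorem ENNReal.tsum_tsum_eq_tsum_sum_antidiagonal (F : ℕ → ℕ → ℝ≥0∞) :
    ∑' i, ∑' j, F i j = ∑' n, ∑ kl ∈ antidiagonal n, F kl.1 kl.2 := by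
  rw [← ENNReal.tsum_prod' (f := fun p : ℕ × ℕ => F p.1 p.2),
    ← Finset.HasAntidiagonal.sigmaAntidiagonalEquivProd.tsum_eq, ENNReal.tsum_sigma']
  congr 1 with n
  rw [← Finset.sum_finset_coe]
  exact tsum_fintype _

namespace PowerSeries

section Nonneg

variable {R : Type*} [CommSemiring R] [PartialOrder R] [IsOrderedRing R] {f g : R⟦X⟧}

theorem coeff_mul_nonneg (hf : ∀ n, 0 ≤ coeff n f) (hg : ∀ n, 0 ≤ coeff n g) (n : ℕ) :
    0 ≤ coeff n (f * g) := by
  rw [coeff_mul]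
  exact Finset.sum_nonneg fun kl _ => mul_nonneg (hf _) (hg _)

theorem coeff_pow_nonneg (hf : ∀ n, 0 ≤ coeff n f) (m n : ℕ) : 0 ≤ coeff n (f ^ m) := by
  induction m generalizing n with
  | zero => rw [pow_zero, coeff_one]; split_ifs <;> simp
  | succ m ih => rw [pow_succ]; exact coeff_mul_nonneg ih hf n

end Nonneg

variable {f g : ℝ⟦X⟧}

theorem tsum_ofReal_coeff_mul (hf : ∀ n, 0 ≤ coeff n f) (hg : ∀ n, 0 ≤ coeff n g) :
    ∑' n, ENNReal.ofReal (coeff n (f * g)) =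
      (∑' n, ENNReal.ofReal (coeff n f)) * ∑' n, ENNReal.ofReal (coeff n g) := by
  simp_rw [← ENNReal.tsum_mul_right, ← ENNReal.tsum_mul_left]
  rw [ENNReal.tsum_tsum_eq_tsum_sum_antidiagonal (fun i j => _ * _)]
  congr 1 with n
  rw [coeff_mul, ENNReal.ofReal_sum_of_nonneg fun kl _ => mul_nonneg (hf _) (hg _)]
  exact Finset.sum_congr rfl fun kl _ => ENNReal.ofReal_mul (hf _)

theorem tsum_ofReal_coeff_pow (hf : ∀ n, 0 ≤ coeff n f) (m : ℕ) :
    ∑' n, ENNReal.ofReal (coeff n (f ^ m)) = (∑' n, ENNReal.ofReal (coeff n f)) ^ m := by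
  induction m with
  | zero =>
    rw [pow_zero, pow_zero, tsum_eq_single 0 fun n hn => by simp [coeff_one, hn]]
    simp
  | succ m ih =>
    rw [pow_succ, pow_succ, tsum_ofReal_coeff_mul (coeff_pow_nonneg hf m) hf, ih]

theorem coeff_exp_subst_nonneg (hg₀ : constantCoeff g = 0) (hg : ∀ n, 0 ≤ coeff n g) (n : ℕ) :
    0 ≤ coeff n ((exp ℝ).subst g) := by
  rw [coeff_subst' (HasSubst.of_constantCoeff_zero' hg₀)]
  exact finsum_nonneg fun d => smul_nonneg (by rw [coeff_exp_eq_inv_factorial]; positivity)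
    (coeff_pow_nonneg hg d n)

theorem tsum_ofReal_coeff_exp_subst (hg₀ : constantCoeff g = 0) (hg : ∀ n, 0 ≤ coeff n g)
    {S : ℝ} (hS : HasSum (fun n => coeff n g) S) :
    ∑' n, ENNReal.ofReal (coeff n ((exp ℝ).subst g)) = ENNReal.ofReal (Real.exp S) := by
  have hsubst := HasSubst.of_constantCoeff_zero' hg₀
  have hexp (d : ℕ) : 0 ≤ coeff d (exp ℝ) := by rw [coeff_exp_eq_inv_factorial]; positivity
  calc ∑' n, ENNReal.ofReal (coeff n ((exp ℝ).subst g))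
      = ∑' n, ∑' d, ENNReal.ofReal (coeff d (exp ℝ)) * ENNReal.ofReal (coeff n (g ^ d)) := by
        congr 1 with n
        have hfin := coeff_subst_finite' hsubst (exp ℝ) n
        rw [coeff_subst' hsubst, ← tsum_eq_finsum (L := .unconditional ℕ) hfin,
          ENNReal.ofReal_tsum_of_nonneg (fun d => smul_nonneg (hexp d) (coeff_pow_nonneg hg d n))
            (summable_of_hasFiniteSupport hfin)]
        congr 1 with d
        rw [smul_eq_mul, ENNReal.ofReal_mul (hexp d)]
    _ = ∑' d, ENNReal.ofReal (S ^ d / d !) := by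
        rw [ENNReal.tsum_comm]
        congr 1 with d
        rw [ENNReal.tsum_mul_left, tsum_ofReal_coeff_pow hg,
          ← ENNReal.ofReal_tsum_of_nonneg hg hS.summable, hS.tsum_eq,
          ← ENNReal.ofReal_pow (hS.nonneg hg), ← ENNReal.ofReal_mul (hexp d),
          coeff_exp_eq_inv_factorial, inv_mul_eq_div]
    _ = ENNReal.ofReal (Real.exp S) := by
        rw [← ENNReal.ofReal_tsum_of_nonneg (fun d => by have := hS.nonneg hg; positivity)
          (NormedSpace.expSeries_div_hasSum_exp S).summable,
          (NormedSpace.expSeries_div_hasSum_exp S).tsum_eq, Real.exp_eq_exp_ℝ]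

noncomputable def coeffMeasure (f : ℝ⟦X⟧) : Measure ℝ :=
  Measure.sum fun k : ℕ => ENNReal.ofReal (coeff k f) • Measure.dirac (k : ℝ)

instance (f : ℝ⟦X⟧) : SFinite (coeffMeasure f) := by
  unfold coeffMeasure; infer_instance

theorem lintegral_coeffMeasure (f : ℝ⟦X⟧) (u : ℝ → ℝ≥0∞) :
    ∫⁻ x, u x ∂coeffMeasure f = ∑' k : ℕ, ENNReal.ofReal (coeff k f) * u k := by
  simp [coeffMeasure, lintegral_sum_measure, lintegral_smul_measure]

theorem coeffMeasure_apply (f : ℝ⟦X⟧) {s : Set ℝ} (hs : MeasurableSet s) :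
    coeffMeasure f s = ∑' k : ℕ, ENNReal.ofReal (coeff k f) * s.indicator 1 (k : ℝ) := by
  rw [← lintegral_indicator_one hs, lintegral_coeffMeasure]

theorem coeffMeasure_Iio_zero (f : ℝ⟦X⟧) : coeffMeasure f (Set.Iio 0) = 0 := by
  simp [coeffMeasure_apply _ measurableSet_Iio]

theorem coeffMeasure_univ (f : ℝ⟦X⟧) :
    coeffMeasure f Set.univ = ∑' k : ℕ, ENNReal.ofReal (coeff k f) := by
  simp [coeffMeasure_apply _ MeasurableSet.univ]

theorem coeffMeasure_C_mul {r : ℝ} (hr : 0 ≤ r) (f : ℝ⟦X⟧) :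
    coeffMeasure (C r * f) = ENNReal.ofReal r • coeffMeasure f := by
  ext s hs
  simp [coeffMeasure_apply _ hs, ENNReal.ofReal_mul hr, ← ENNReal.tsum_mul_left, mul_assoc]

theorem coeffMeasure_mul (hf : ∀ n, 0 ≤ coeff n f) (hg : ∀ n, 0 ≤ coeff n g) :
    coeffMeasure (f * g) = (coeffMeasure f).conv (coeffMeasure g) := by
  ext s hs
  rw [coeffMeasure_apply _ hs, ← lintegral_indicator_one hs,
    Measure.lintegral_conv (measurable_one.indicator hs), lintegral_coeffMeasure]
  simp_rw [lintegral_coeffMeasure, ← ENNReal.tsum_mul_left]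
  rw [ENNReal.tsum_tsum_eq_tsum_sum_antidiagonal (fun i j => _ * (_ * _))]
  congr 1 with n
  rw [coeff_mul, ENNReal.ofReal_sum_of_nonneg fun kl _ => mul_nonneg (hf _) (hg _), Finset.sum_mul]
  refine Finset.sum_congr rfl fun kl hkl => ?_
  have hn : (kl.1 : ℝ) + kl.2 = n := by exact_mod_cast mem_antidiagonal.mp hkl
  rw [ENNReal.ofReal_mul (hf _), hn, mul_assoc]

theorem isProbabilityMeasure_coeffMeasure_exp_subst (hg₀ : constantCoeff g = 0)
    (hg : ∀ n, 0 ≤ coeff n g) {S : ℝ} (hS : HasSum (fun n => coeff n g) S) :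
    IsProbabilityMeasure (coeffMeasure (C (Real.exp S)⁻¹ * (exp ℝ).subst g)) := by
  constructor
  rw [coeffMeasure_C_mul (by positivity), Measure.smul_apply, coeffMeasure_univ,
    tsum_ofReal_coeff_exp_subst hg₀ hg hS, smul_eq_mul, ← ENNReal.ofReal_mul (by positivity),
    inv_mul_cancel₀ (Real.exp_pos S).ne', ENNReal.ofReal_one]

end PowerSeries

theorem negBinomMeasure_conv_negBinomMeasure {α α' p p' : ℝ} (hα : 0 < α) (hp₀ : 0 ≤ p)
    (hp₁ : p ≤ 1) (hα' : 0 < α') (hp₀' : 0 ≤ p') (hp₁' : p' ≤ 1) :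
    (negBinomMeasure α p).conv (negBinomMeasure α' p') =
      coeffMeasure (mk (negBinomPMF α p) * mk (negBinomPMF α' p')) := by
  rw [coeffMeasure_mul (coeff_mk_negBinomPMF_nonneg hα hp₀ hp₁)
    (coeff_mk_negBinomPMF_nonneg hα' hp₀' hp₁')]
  simp [negBinomMeasure, coeffMeasure]

/-- Arrangement property for convolution order of negative binomials: pairing
the larger shape with the smaller success probability dominates. -/
theorem negBinom_arrangement_conv_order (α₁ α₂ p₁ p₂ : ℝ) (hα₁ : 0 < α₁)
    (hα : α₁ < α₂) (hp₂ : 0 < p₂) (hp : p₂ < p₁) (hp₁ : p₁ < 1) :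
    ConvLE ((negBinomMeasure α₂ p₁).conv (negBinomMeasure α₁ p₂))
      ((negBinomMeasure α₁ p₁).conv (negBinomMeasure α₂ p₂)) := by
  have hp₁₀ : 0 < p₁ := hp₂.trans hp
  have hp₂₁ : p₂ < 1 := hp.trans hp₁
  have hα₂ : 0 < α₂ := hα₁.trans hα
  set g := C (α₂ - α₁) * (negLogOneSub (1 - p₂) - negLogOneSub (1 - p₁))
  have hg₀ : constantCoeff g = 0 := by simp [g]
  have hg : ∀ n, 0 ≤ coeff n g :=
    coeff_C_mul_negLogOneSub_sub_nonneg (by linarith) (by linarith) (by linarith)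
  have hS := hasSum_coeff_C_mul_negLogOneSub_sub (α₂ - α₁)
    (q₁ := 1 - p₁) (by rw [abs_lt]; constructor <;> linarith)
    (q₂ := 1 - p₂) (by rw [abs_lt]; constructor <;> linarith)
  rw [sub_sub_cancel, sub_sub_cancel, ← Real.log_div hp₁₀.ne' hp₂.ne', mul_comm (α₂ - α₁)] at hS
  have hr : (p₂ / p₁) ^ (α₂ - α₁) = (Real.exp (Real.log (p₁ / p₂) * (α₂ - α₁)))⁻¹ := by
    rw [← Real.rpow_def_of_pos (by positivity), ← Real.inv_rpow (by positivity), inv_div]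
  refine ⟨_, isProbabilityMeasure_coeffMeasure_exp_subst hg₀ hg hS, coeffMeasure_Iio_zero _, ?_⟩
  rw [negBinomMeasure_conv_negBinomMeasure hα₁ hp₁₀.le hp₁.le hα₂ hp₂.le hp₂₁.le,
    negBinomMeasure_conv_negBinomMeasure hα₂ hp₁₀.le hp₁.le hα₁ hp₂.le hp₂₁.le,
    mk_negBinomPMF_mul_mk_negBinomPMF hα₁ hα₂ hp₁₀ hp₂, hr,
    coeffMeasure_mul (coeff_mul_nonneg (coeff_mk_negBinomPMF_nonneg hα₂ hp₁₀.le hp₁.le)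
      (coeff_mk_negBinomPMF_nonneg hα₁ hp₂.le hp₂₁.le))
      fun n => by
        rw [coeff_C_mul]; exact mul_nonneg (by positivity) (coeff_exp_subst_nonneg hg₀ hg n)]
end
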